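/- Let (Ω, F, P) be a non-atomic probability space and let S denote the linear span (over ℝ) of { U − V : U, V ∈ L^∞(P), U ~ V } inside L^∞(P). Then for every X ∈ L^∞(P), the element X − E[X]·1 belongs to the closure of S in the essential supremum norm. -/

import Mathlib

open MeasureTheory ProbabilityTheory
open scoped ENNReal

/-- A measure is nonatomic if every measurable set of positive measure admits a measurable
subset of strictly smaller positive measure. -/
def Nonatomic {Ω : Type*} [MeasurableSpace Ω] (μ : Measure Ω) : Prop :=
  ∀ s : Set Ω, MeasurableSet s → 0 < μ s →
    ∃ t, t ⊆ s ∧ MeasurableSet t ∧ 0 < μ t ∧ μ t < μ s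

open Set Filter
open scoped Topology

section Sierpinski
variable {Ω : Type*} [MeasurableSpace Ω] {P : Measure Ω} [IsProbabilityMeasure P]

theorem Nonatomic.half (hP : Nonatomic P) {s : Set Ω} (hs : MeasurableSet s) (h : 0 < P s) :
    ∃ t, t ⊆ s ∧ MeasurableSet t ∧ 0 < P t ∧ P t ≤ P s / 2 := by
  obtain ⟨t, hts, htm, ht0, htlt⟩ := hP s hs h
  by_cases hle : P t ≤ P s / 2
  · exact ⟨t, hts, htm, ht0, hle⟩
  · push_neg at hle
    refine ⟨s \ t, diff_subset, hs.diff htm, ?_, ?_⟩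
    · rw [measure_diff hts htm.nullMeasurableSet (measure_ne_top P t)]
      exact tsub_pos_of_lt htlt
    · rw [measure_diff hts htm.nullMeasurableSet (measure_ne_top P t)]
      rw [tsub_le_iff_right]
      calc P s = P s / 2 + P s / 2 := (ENNReal.add_halves _).symm
      _ ≤ P s / 2 + P t := by gcongr

theorem Nonatomic.exists_le (hP : Nonatomic P) {s : Set Ω} (hs : MeasurableSet s) (h : 0 < P s)
    {ε : ℝ≥0∞} (hε : ε ≠ 0) :
    ∃ t, t ⊆ s ∧ MeasurableSet t ∧ 0 < P t ∧ P t ≤ ε := by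
  have key : ∀ n : ℕ, ∃ t, t ⊆ s ∧ MeasurableSet t ∧ 0 < P t ∧ P t ≤ 2⁻¹ ^ n := by
    intro n
    induction n with
    | zero => exact ⟨s, subset_rfl, hs, h, by simpa using prob_le_one⟩
    | succ n ih =>
      obtain ⟨t, hts, htm, ht0, htle⟩ := ih
      obtain ⟨t', ht's, ht'm, ht'0, ht'le⟩ := hP.half htm ht0
      refine ⟨t', ht's.trans hts, ht'm, ht'0, ?_⟩
      calc P t' ≤ P t / 2 := ht'le
      _ ≤ 2⁻¹ ^ n / 2 := by gcongr
      _ = 2⁻¹ ^ (n + 1) := by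
        rw [pow_succ, ENNReal.div_eq_inv_mul, mul_comm]
  obtain ⟨n, hn⟩ := ENNReal.exists_inv_two_pow_lt hε
  obtain ⟨t, h1, h2, h3, h4⟩ := key n
  exact ⟨t, h1, h2, h3, h4.trans hn.le⟩

theorem Nonatomic.exists_measure_eq (hP : Nonatomic P) {s : Set Ω} (hs : MeasurableSet s)
    {c : ℝ≥0∞} (hc : c ≤ P s) : ∃ t, t ⊆ s ∧ MeasurableSet t ∧ P t = c := by
  classical
  -- the "good" predicate
  set G : Set Ω → Prop := fun t => t ⊆ s ∧ MeasurableSet t ∧ P t ≤ c with hG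
  -- greedy step
  have step : ∀ t, G t → ∃ u, MeasurableSet u ∧ u ⊆ s \ t ∧ P t + P u ≤ c ∧
      ∀ v, MeasurableSet v → v ⊆ s \ t → P t + P v ≤ c → P v ≤ 2 * P u := by
    intro t ht
    set δ : ℝ≥0∞ := ⨆ (v : {v : Set Ω // MeasurableSet v ∧ v ⊆ s \ t ∧ P t + P v ≤ c}), P v.1 with hδ
    by_cases h0 : δ = 0
    · refine ⟨∅, MeasurableSet.empty, empty_subset _, by simpa using ht.2.2, ?_⟩
      intro v hv1 hv2 hv3
      have : P v ≤ δ := le_iSup_iff.2 fun b hb => hb ⟨v, hv1, hv2, hv3⟩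
      simp [h0] at this
      simp [this]
    · have hδtop : δ ≠ ∞ := by
        have : δ ≤ 1 := by
          apply iSup_le
          intro v
          exact prob_le_one
        exact (this.trans_lt ENNReal.one_lt_top).ne
      have hhalf : δ / 2 < δ := ENNReal.half_lt_self h0 hδtop
      obtain ⟨⟨u, hu1, hu2, hu3⟩, hu4⟩ := lt_iSup_iff.1 hhalf
      refine ⟨u, hu1, hu2, hu3, ?_⟩
      intro v hv1 hv2 hv3
      have hvδ : P v ≤ δ := le_iSup_iff.2 fun b hb => hb ⟨v, hv1, hv2, hv3⟩
      calc P v ≤ δ := hvδ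
      _ = δ / 2 + δ / 2 := (ENNReal.add_halves _).symm
      _ ≤ P u + P u := by gcongr <;> exact hu4.le
      _ = 2 * P u := (two_mul _).symm
  choose! u hu1 hu2 hu3 hu4 using step
  -- the increasing sequence
  have hG0 : G ∅ := ⟨empty_subset _, MeasurableSet.empty, by simp⟩
  have hGstep : ∀ t, G t → G (t ∪ u t) := by
    intro t ht
    refine ⟨union_subset ht.1 ((hu2 t ht).trans diff_subset), ht.2.1.union (hu1 t ht), ?_⟩
    calc P (t ∪ u t) ≤ P t + P (u t) := measure_union_le _ _
    _ ≤ c := hu3 t ht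
  let T : ℕ → {t : Set Ω // G t} := fun n =>
    Nat.rec ⟨∅, hG0⟩ (fun _ t => ⟨t.1 ∪ u t.1, hGstep t.1 t.2⟩) n
  have hTsucc : ∀ n, (T (n + 1)).1 = (T n).1 ∪ u (T n).1 := fun n => rfl
  have hTmono : Monotone fun n => (T n).1 := by
    apply monotone_nat_of_le_succ
    intro n
    rw [hTsucc]
    exact subset_union_left
  set Tω : Set Ω := ⋃ n, (T n).1 with hTω
  have hTωs : Tω ⊆ s := iUnion_subset fun n => (T n).2.1
  have hTωm : MeasurableSet Tω := MeasurableSet.iUnion fun n => (T n).2.2.1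
  have hTωP : P Tω = ⨆ n, P (T n).1 :=
    (hTmono.directed_le).measure_iUnion
  have hTωc : P Tω ≤ c := by
    rw [hTωP]; exact iSup_le fun n => (T n).2.2.2
  refine ⟨Tω, hTωs, hTωm, ?_⟩
  by_contra hne
  have hlt : P Tω < c := lt_of_le_of_ne hTωc hne
  -- find a small set in s \ Tω
  have hdiff : 0 < P (s \ Tω) := by
    rw [measure_diff hTωs hTωm.nullMeasurableSet (measure_ne_top P _)]
    exact tsub_pos_of_lt (hlt.trans_le hc)
  have hγ : c - P Tω ≠ 0 := by
    simpa using tsub_pos_of_lt hlt |>.ne'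
  obtain ⟨v, hv1, hv2, hv3, hv4⟩ := hP.exists_le (hs.diff hTωm) hdiff hγ
  -- v is admissible for every T n
  have hadm : ∀ n, P v ≤ 2 * P (u (T n).1) := by
    intro n
    apply hu4 (T n).1 (T n).2 v hv2
    · exact hv1.trans (diff_subset_diff_right (subset_iUnion (fun n => (T n).1) n))
    · calc P (T n).1 + P v ≤ P Tω + (c - P Tω) :=
            add_le_add (measure_mono (subset_iUnion (fun n => (T n).1) n)) hv4
      _ = c := add_tsub_cancel_of_le hlt.le
  -- the u's are pairwise disjoint, so their measures are summable
  have hd_sub : ∀ n, u (T n).1 ⊆ (T (n + 1)).1 \ (T n).1 := by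
    intro n
    rw [hTsucc]
    intro x hx
    exact ⟨Or.inr hx, ((hu2 (T n).1 (T n).2) hx).2⟩
  have hdisj : Pairwise (Function.onFun Disjoint fun n => u (T n).1) := by
    intro m n hmn
    wlog h : m < n generalizing m n
    · exact (this hmn.symm (by omega)).symm
    apply Set.disjoint_left.2
    intro x hxm hxn
    have hx1 : x ∈ (T (m + 1)).1 := (hd_sub m hxm).1
    have hx2 : x ∉ (T n).1 := (hd_sub n hxn).2
    exact hx2 (hTmono (by omega : m + 1 ≤ n) hx1)
  have hsum : ∑' n, P (u (T n).1) ≤ 1 := by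
    rw [← measure_iUnion hdisj fun n => hu1 (T n).1 (T n).2]
    exact prob_le_one
  -- contradiction
  have : ∑' _ : ℕ, P v ≤ 2 * 1 := by
    calc ∑' n : ℕ, P v ≤ ∑' n, 2 * P (u (T n).1) := ENNReal.tsum_le_tsum hadm
    _ = 2 * ∑' n, P (u (T n).1) := ENNReal.tsum_mul_left
    _ ≤ 2 * 1 := by gcongr
  rw [ENNReal.tsum_const_eq_top_of_ne_zero hv3.ne'] at this
  simp at this

end Sierpinski


section Dev
variable {Ω : Type*} [MeasurableSpace Ω] {P : Measure Ω} [IsProbabilityMeasure P]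
end Dev


section Dev
variable {Ω : Type*} [MeasurableSpace Ω] {P : Measure Ω} [IsProbabilityMeasure P]

-- sum pairing helper
theorem sum_range_two_mul (N : ℕ) (a : ℕ → ℝ) :
    ∑ m ∈ Finset.range (2 * N), a m = ∑ k ∈ Finset.range N, (a (2 * k) + a (2 * k + 1)) := by
  induction N with
  | zero => simp
  | succ N ih =>
    have h2 : 2 * (N + 1) = (2 * N + 1) + 1 := by ring
    rw [h2, Finset.sum_range_succ, Finset.sum_range_succ, ih, Finset.sum_range_succ]
    ring

structure DyadicChain {Ω : Type*} [MeasurableSpace Ω] (P : Measure Ω) (C : Set Ω) (n : ℕ)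
    (f : ℕ → Set Ω) : Prop where
  meas : ∀ k, MeasurableSet (f k)
  mono : Monotone f
  sub : ∀ k, f k ⊆ C
  measure_eq : ∀ k, k ≤ 2 ^ n → P (f k) = k * (P C / 2 ^ n)
  top : ∀ k, 2 ^ n ≤ k → f k = C
end Dev

section Dev2
variable {Ω : Type*} [MeasurableSpace Ω] {P : Measure Ω} [IsProbabilityMeasure P]

theorem DyadicChain.step (hP : Nonatomic P) {C : Set Ω} {n : ℕ} {f : ℕ → Set Ω}
    (hf : DyadicChain P C n f) :
    ∃ g, DyadicChain P C (n + 1) g ∧ ∀ k, g (2 * k) = f k := by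
  classical
  have hbeta : P C / 2 ^ n = 2 * (P C / 2 ^ (n + 1)) := by
    rw [← mul_div_assoc, pow_succ, mul_comm ((2:ℝ≥0∞) ^ n) 2,
      ENNReal.mul_div_mul_left _ _ (by norm_num) (by norm_num)]
  have hdiff : ∀ k, k < 2 ^ n → P (f (k + 1) \ f k) = P C / 2 ^ n := by
    intro k hk
    rw [measure_diff (hf.mono (Nat.le_succ k)) (hf.meas k).nullMeasurableSet (measure_ne_top P _),
      hf.measure_eq (k + 1) hk, hf.measure_eq k hk.le]
    push_cast
    rw [add_mul, one_mul, ENNReal.add_sub_cancel_left]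
    exact ENNReal.mul_ne_top (by simp) (by simp [ENNReal.div_eq_top, measure_ne_top P C])
  have hex : ∀ k, ∃ u, u ⊆ f (k + 1) \ f k ∧ MeasurableSet u ∧
      P u = if k < 2 ^ n then P C / 2 ^ (n + 1) else 0 := by
    intro k
    have h := hP.exists_measure_eq (s := f (k + 1) \ f k) ((hf.meas (k + 1)).diff (hf.meas k))
      (c := if k < 2 ^ n then P C / 2 ^ (n + 1) else 0) ?_
    · obtain ⟨t, h1, h2, h3⟩ := h
      exact ⟨t, h1, h2, h3⟩
    · split_ifs with h
      · rw [hdiff k h]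
        gcongr <;> norm_num
      · exact zero_le
  choose u hu1 hu2 hu3 using hex
  refine ⟨fun m => if m % 2 = 0 then f (m / 2) else f (m / 2) ∪ u (m / 2), ?_, ?_⟩
  · constructor
    · intro m
      split_ifs
      · exact hf.meas _
      · exact (hf.meas _).union (hu2 _)
    · apply monotone_nat_of_le_succ
      intro m
      rcases Nat.even_or_odd m with ⟨j, hj⟩ | ⟨j, hj⟩
      · subst hj
        have h1 : (j + j) % 2 = 0 := by omega
        have h2 : (j + j + 1) % 2 = 1 := by omega
        have h3 : (j + j) / 2 = j := by omega
        have h4 : (j + j + 1) / 2 = j := by omega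
        simp only [h1, h2, h3, h4]
        rw [if_pos trivial, if_neg (by omega)]
        exact subset_union_left
      · subst hj
        have h2 : (2 * j + 1) % 2 = 1 := by omega
        have h4 : (2 * j + 1) / 2 = j := by omega
        have h5 : (2 * j + 1 + 1) % 2 = 0 := by omega
        have h6 : (2 * j + 1 + 1) / 2 = j + 1 := by omega
        simp only [h2, h4, h5, h6]
        rw [if_neg (by omega), if_pos trivial]
        exact union_subset (hf.mono (Nat.le_succ j)) ((hu1 j).trans diff_subset)
    · intro m
      split_ifs
      · exact hf.sub _
      · exact union_subset (hf.sub _) (((hu1 _).trans diff_subset).trans (hf.sub _))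
    · intro m hm
      rcases Nat.even_or_odd m with ⟨j, hj⟩ | ⟨j, hj⟩
      · subst hj
        have h1 : (j + j) % 2 = 0 := by omega
        have h3 : (j + j) / 2 = j := by omega
        have hj2 : j ≤ 2 ^ n := by
          have : 2 ^ (n + 1) = 2 * 2 ^ n := by ring
          omega
        simp only [h1, h3]
        rw [if_pos trivial, hf.measure_eq j hj2, hbeta]
        push_cast
        ring
      · subst hj
        have h2 : (2 * j + 1) % 2 = 1 := by omega
        have h4 : (2 * j + 1) / 2 = j := by omega
        have hj2 : j < 2 ^ n := by
          have : 2 ^ (n + 1) = 2 * 2 ^ n := by ring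
          omega
        simp only [h2, h4]
        rw [if_neg (by omega)]
        have hdisj : Disjoint (f j) (u j) :=
          Set.disjoint_left.2 fun x hx hx' => ((hu1 j) hx').2 hx
        rw [measure_union hdisj (hu2 j), hf.measure_eq j hj2.le, hu3 j, if_pos hj2, hbeta]
        push_cast
        ring
    · intro m hm
      have h2n : 2 ^ (n + 1) = 2 * 2 ^ n := by ring
      rcases Nat.even_or_odd m with ⟨j, hj⟩ | ⟨j, hj⟩
      · subst hj
        have h1 : (j + j) % 2 = 0 := by omega
        have h3 : (j + j) / 2 = j := by omega
        simp only [h1, h3]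
        rw [if_pos trivial]
        exact hf.top j (by omega)
      · subst hj
        have h2 : (2 * j + 1) % 2 = 1 := by omega
        have h4 : (2 * j + 1) / 2 = j := by omega
        simp only [h2, h4]
        rw [if_neg (by omega)]
        have hju : u j ⊆ ∅ := by
          have hj2 : 2 ^ n ≤ j := by omega
          have := hu1 j
          rw [hf.top j hj2, hf.top (j + 1) (by omega)] at this
          simpa using this
        rw [hf.top j (by omega)]
        simp [eq_empty_of_subset_empty hju]
  · intro k
    have h1 : (2 * k) % 2 = 0 := by omega
    have h3 : (2 * k) / 2 = k := by omega
    simp only [h1, h3]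
    rw [if_pos trivial]

theorem exists_dyadicChain (hP : Nonatomic P) {C : Set Ω} (hC : MeasurableSet C) :
    ∃ D : ℕ → ℕ → Set Ω, (∀ n, DyadicChain P C n (D n)) ∧
      ∀ n k, D (n + 1) (2 * k) = D n k := by
  classical
  have base : DyadicChain P C 0 (fun k => if k = 0 then (∅ : Set Ω) else C) := by
    constructor
    · intro k; split_ifs; exacts [MeasurableSet.empty, hC]
    · intro i j hij x hx
      simp only at hx ⊢
      by_cases h1 : i = 0
      · rw [if_pos h1] at hx; exact absurd hx (notMem_empty x)
      · rw [if_neg h1] at hx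
        rw [if_neg (by omega)]
        exact hx
    · intro k; split_ifs; exacts [empty_subset _, subset_rfl]
    · intro k hk
      interval_cases k <;> simp
    · intro k hk
      rw [if_neg (by omega)]
  have step : ∀ n (f : {f : ℕ → Set Ω // DyadicChain P C n f}),
      ∃ g : {g : ℕ → Set Ω // DyadicChain P C (n + 1) g}, ∀ k, g.1 (2 * k) = f.1 k := by
    intro n f
    obtain ⟨g, hg, hgk⟩ := f.2.step hP
    exact ⟨⟨g, hg⟩, hgk⟩
  choose gfun hgfun using step
  let T : (n : ℕ) → {f : ℕ → Set Ω // DyadicChain P C n f} := fun n =>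
    Nat.rec ⟨_, base⟩ (fun n f => gfun n f) n
  refine ⟨fun n => (T n).1, fun n => (T n).2, fun n k => ?_⟩
  exact hgfun n (T n) k

end Dev2

section Unif
variable {Ω : Type*} [MeasurableSpace Ω] {P : Measure Ω} [IsProbabilityMeasure P]

theorem sum_ite_le_real (N j : ℕ) :
    (∑ i ∈ Finset.range N, if i + 1 ≤ j then (1:ℝ) else 0) ≤ j := by
  rw [Finset.sum_boole]
  have hsub : (Finset.range N).filter (fun i => i + 1 ≤ j) ⊆ Finset.range j := by
    intro i hi
    have := (Finset.mem_filter.1 hi).2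
    exact Finset.mem_range.2 (by omega)
  have := Finset.card_le_card hsub
  rw [Finset.card_range] at this
  exact_mod_cast this

theorem sum_ite_eq_card_real (N k : ℕ) (h : k ≤ N) :
    (∑ i ∈ Finset.range N, if i + 1 ≤ k then (1:ℝ) else 0) = k := by
  rw [Finset.sum_boole]
  have : (Finset.range N).filter (fun i => i + 1 ≤ k) = Finset.range k := by
    ext i
    simp only [Finset.mem_filter, Finset.mem_range]
    omega
  rw [this, Finset.card_range]

theorem Nonatomic.exists_uniformOn (hP : Nonatomic P) {C : Set Ω} (hC : MeasurableSet C) :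
    ∃ W : Ω → ℝ, Measurable W ∧ (∀ ω, W ω ∈ Icc (0:ℝ) 1) ∧
      ∀ t, 0 ≤ t → t ≤ 1 → P (C ∩ {ω | W ω ≤ t}) = ENNReal.ofReal t * P C := by
  classical
  obtain ⟨D, hD, hcons⟩ := exists_dyadicChain hP hC
  set Wn : ℕ → Ω → ℝ := fun n ω =>
    (∑ k ∈ Finset.range (2 ^ n), if ω ∈ D n (k + 1) then (0:ℝ) else 1) / 2 ^ n with hWndef
  have hWnmeas : ∀ n, Measurable (Wn n) := by
    intro n
    apply Measurable.div_const
    apply Finset.measurable_sum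
    intro k _
    exact Measurable.ite ((hD n).meas (k + 1)) measurable_const measurable_const
  have hterm0 : ∀ n k ω, (0:ℝ) ≤ (if ω ∈ D n (k + 1) then (0:ℝ) else 1) := by
    intro n k ω; split_ifs <;> norm_num
  have hterm1 : ∀ n k ω, (if ω ∈ D n (k + 1) then (0:ℝ) else 1) ≤ 1 := by
    intro n k ω; split_ifs <;> norm_num
  have hWn0 : ∀ n ω, 0 ≤ Wn n ω := fun n ω =>
    div_nonneg (Finset.sum_nonneg fun k _ => hterm0 n k ω) (by positivity)
  have hWn1 : ∀ n ω, Wn n ω ≤ 1 := by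
    intro n ω
    rw [hWndef]
    simp only
    rw [div_le_one (by positivity)]
    calc (∑ k ∈ Finset.range (2 ^ n), if ω ∈ D n (k + 1) then (0:ℝ) else 1)
        ≤ ∑ _k ∈ Finset.range (2 ^ n), (1:ℝ) := Finset.sum_le_sum fun k _ => hterm1 n k ω
    _ = 2 ^ n := by simp
  -- single-level bounds
  have key1n : ∀ n k ω, ω ∈ D n k → Wn n ω ≤ k / 2 ^ n := by
    intro n k ω hmem
    rw [hWndef]
    simp only
    rw [div_le_div_iff₀ (by positivity) (by positivity)]
    apply mul_le_mul_of_nonneg_right _ (by positivity : (0:ℝ) ≤ 2 ^ n)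
    calc (∑ i ∈ Finset.range (2 ^ n), if ω ∈ D n (i + 1) then (0:ℝ) else 1)
        ≤ (∑ i ∈ Finset.range (2 ^ n), if i + 1 ≤ k then (1:ℝ) else 0) := by
          apply Finset.sum_le_sum
          intro i _
          by_cases hik : i + 1 ≤ k
          · rw [if_pos hik]; exact hterm1 _ _ _
          · push_neg at hik
            have : ω ∈ D n (i + 1) := (hD n).mono (by omega) hmem
            rw [if_pos this, if_neg (by omega)]
    _ ≤ (k : ℝ) := sum_ite_le_real (2 ^ n) k
  have key2n : ∀ n k ω, k ≤ 2 ^ n → ω ∉ D n k → (k : ℝ) / 2 ^ n ≤ Wn n ω := by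
    intro n k ω hk hmem
    rw [hWndef]
    simp only
    rw [div_le_div_iff₀ (by positivity) (by positivity)]
    have hle : (∑ i ∈ Finset.range (2 ^ n), if i + 1 ≤ k then (1:ℝ) else 0)
        ≤ ∑ i ∈ Finset.range (2 ^ n), if ω ∈ D n (i + 1) then (0:ℝ) else 1 := by
      apply Finset.sum_le_sum
      intro i _
      by_cases hik : i + 1 ≤ k
      · have : ω ∉ D n (i + 1) := fun h => hmem ((hD n).mono hik h)
        rw [if_pos hik, if_neg this]
      · rw [if_neg hik]; exact hterm0 _ _ _
    rw [sum_ite_eq_card_real (2 ^ n) k hk] at hle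
    gcongr
  -- monotonicity in n
  have hWnmono : ∀ ω, Monotone fun n => Wn n ω := by
    intro ω
    apply monotone_nat_of_le_succ
    intro n
    have hkey : ∀ k, (if ω ∈ D n (k + 1) then (0:ℝ) else 1) + (if ω ∈ D n (k + 1) then (0:ℝ) else 1)
        ≤ (if ω ∈ D (n + 1) (2 * k + 1) then (0:ℝ) else 1) +
          (if ω ∈ D (n + 1) (2 * k + 1 + 1) then (0:ℝ) else 1) := by
      intro k
      have h2 : D (n + 1) (2 * k + 1 + 1) = D n (k + 1) := by
        have he : 2 * k + 1 + 1 = 2 * (k + 1) := by ring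
        rw [he, hcons]
      rw [h2]
      gcongr ?_ + ?_
      · by_cases hmem : ω ∈ D n (k + 1)
        · rw [if_pos hmem]; exact hterm0 _ _ _
        · have hh : ω ∉ D (n + 1) (2 * k + 1) := by
            intro hmem'
            exact hmem (h2 ▸ (hD (n + 1)).mono (Nat.le_succ _) hmem')
          rw [if_neg hmem, if_neg hh]
      · exact le_rfl
    have e1 : Wn (n + 1) ω = (∑ k ∈ Finset.range (2 ^ n),
        ((if ω ∈ D (n + 1) (2 * k + 1) then (0:ℝ) else 1) +
         (if ω ∈ D (n + 1) (2 * k + 1 + 1) then (0:ℝ) else 1))) / (2 * 2 ^ n) := by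
      rw [hWndef]
      simp only
      have hsplit : (2:ℕ) ^ (n + 1) = 2 * 2 ^ n := by ring
      have hd : (2:ℝ) ^ (n + 1) = 2 * 2 ^ n := by ring
      rw [hsplit, sum_range_two_mul, hd]
    have e2 : Wn n ω = (∑ k ∈ Finset.range (2 ^ n),
        ((if ω ∈ D n (k + 1) then (0:ℝ) else 1) +
         (if ω ∈ D n (k + 1) then (0:ℝ) else 1))) / (2 * 2 ^ n) := by
      rw [hWndef]
      simp only
      rw [Finset.sum_add_distrib, ← two_mul, mul_div_mul_left _ _ (two_ne_zero (α := ℝ))]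
    rw [e1, e2]
    apply (div_le_div_iff_of_pos_right (by positivity : (0:ℝ) < 2 * 2 ^ n)).2
    exact Finset.sum_le_sum fun k _ => hkey k
  -- the limit
  set W : Ω → ℝ := fun ω => ⨆ n, Wn n ω with hWdef
  have hbdd : ∀ ω, BddAbove (range fun n => Wn n ω) := by
    intro ω
    exact ⟨1, by rintro x ⟨n, rfl⟩; exact hWn1 n ω⟩
  have hWmeas : Measurable W := Measurable.iSup hWnmeas
  have hWle : ∀ n ω, Wn n ω ≤ W ω := fun n ω => le_ciSup (hbdd ω) n
  have hW0 : ∀ ω, 0 ≤ W ω := fun ω => (hWn0 0 ω).trans (hWle 0 ω)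
  have hW1 : ∀ ω, W ω ≤ 1 := fun ω => ciSup_le fun n => hWn1 n ω
  have key1 : ∀ n k ω, k ≤ 2 ^ n → ω ∈ D n k → W ω ≤ k / 2 ^ n := by
    intro n k ω hk hmem
    have hiter : ∀ j, ω ∈ D (n + j) (2 ^ j * k) := by
      intro j
      induction j with
      | zero => simpa using hmem
      | succ j ih =>
        have h1 : 2 ^ (j + 1) * k = 2 * (2 ^ j * k) := by ring
        have h2 : n + (j + 1) = (n + j) + 1 := by ring
        rw [h1, h2, hcons]
        exact ih
    apply ciSup_le
    intro m
    have hdiveq : ∀ j : ℕ, ((2 ^ j * k : ℕ) : ℝ) / 2 ^ (n + j) = (k : ℝ) / 2 ^ n := by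
      intro j
      push_cast
      rw [pow_add]
      field_simp
    rcases le_total m n with hmn | hnm
    · calc Wn m ω ≤ Wn n ω := hWnmono ω hmn
      _ ≤ (k : ℝ) / 2 ^ n := by
          have := key1n n k ω hmem
          exact this
    · obtain ⟨j, rfl⟩ := le_iff_exists_add.1 hnm
      calc Wn (n + j) ω ≤ ((2 ^ j * k : ℕ) : ℝ) / 2 ^ (n + j) := key1n (n + j) _ ω (hiter j)
      _ = (k : ℝ) / 2 ^ n := hdiveq j
  have key2 : ∀ n k ω, k ≤ 2 ^ n → ω ∉ D n k → (k : ℝ) / 2 ^ n ≤ W ω := by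
    intro n k ω hk hmem
    exact (key2n n k ω hk hmem).trans (hWle n ω)
  -- conclusion
  refine ⟨W, hWmeas, fun ω => ⟨hW0 ω, hW1 ω⟩, ?_⟩
  intro t ht0 ht1
  have hWsm : MeasurableSet {ω | W ω ≤ t} := hWmeas measurableSet_Iic
  set F : ℝ≥0∞ := P (C ∩ {ω | W ω ≤ t}) with hF
  have hFfin : F ≠ ⊤ := measure_ne_top _ _
  set p : ℝ := (P C).toReal with hp
  have hp0 : 0 ≤ p := ENNReal.toReal_nonneg
  have hDval : ∀ n k, k ≤ 2 ^ n → (P (D n k)).toReal = k * (p / 2 ^ n) := by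
    intro n k hk
    rw [(hD n).measure_eq k hk, ENNReal.toReal_mul, ENNReal.toReal_div, ← hp]
    simp
  -- lower bound
  have hlow : ∀ n : ℕ, (t - (2⁻¹ : ℝ) ^ n) * p ≤ F.toReal := by
    intro n
    set k : ℕ := ⌊t * 2 ^ n⌋₊ with hk
    have hk2 : k ≤ 2 ^ n := by
      have h1 : t * 2 ^ n ≤ 2 ^ n := by
        nlinarith [pow_pos (by norm_num : (0:ℝ) < 2) n]
      calc k ≤ ⌊((2:ℝ) ^ n)⌋₊ := Nat.floor_mono h1
      _ = 2 ^ n := by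
          rw [show ((2:ℝ) ^ n) = ((2 ^ n : ℕ) : ℝ) by push_cast; ring, Nat.floor_natCast]
    have hkt : (k : ℝ) / 2 ^ n ≤ t := by
      rw [div_le_iff₀ (by positivity)]
      exact Nat.floor_le (by positivity)
    have hsub : D n k ⊆ C ∩ {ω | W ω ≤ t} := by
      intro x hx
      exact ⟨(hD n).sub k hx, le_trans (key1 n k x hk2 hx) hkt⟩
    have hPle : P (D n k) ≤ F := measure_mono hsub
    have := ENNReal.toReal_mono hFfin hPle
    rw [hDval n k hk2] at this
    refine le_trans ?_ this
    have hkl : t * 2 ^ n - 1 ≤ (k : ℝ) := by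
      have := Nat.lt_floor_add_one (t * 2 ^ n)
      linarith
    have h2n : (0:ℝ) < 2 ^ n := by positivity
    have hinv : (2⁻¹ : ℝ) ^ n = 1 / 2 ^ n := by
      rw [inv_pow]
      ring
    rw [hinv]
    have : (t - 1 / 2 ^ n) * 2 ^ n ≤ (k:ℝ) := by
      field_simp
      linarith
    calc (t - 1 / 2 ^ n) * p = ((t - 1 / 2 ^ n) * 2 ^ n) * (p / 2 ^ n) := by
          field_simp
    _ ≤ k * (p / 2 ^ n) := by
          apply mul_le_mul_of_nonneg_right this (by positivity)
  -- upper bound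
  have hhigh : ∀ n : ℕ, F.toReal ≤ (t + (2⁻¹ : ℝ) ^ n) * p := by
    intro n
    set k : ℕ := ⌊t * 2 ^ n⌋₊ + 1 with hk
    have h2n : (0:ℝ) < 2 ^ n := by positivity
    have hku : (k : ℝ) ≤ t * 2 ^ n + 1 := by
      push_cast [hk]
      have := Nat.floor_le (show (0:ℝ) ≤ t * 2 ^ n by positivity)
      linarith
    by_cases hcase : k ≤ 2 ^ n
    · have hsub : C ∩ {ω | W ω ≤ t} ⊆ D n k := by
        intro x hx
        by_contra hmem
        have := key2 n k x hcase hmem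
        have hkgt : t < (k : ℝ) / 2 ^ n := by
          rw [lt_div_iff₀ h2n]
          have := Nat.lt_floor_add_one (t * 2 ^ n)
          push_cast [hk]
          linarith
        have hWx := hx.2
        simp only [mem_setOf_eq] at hWx
        linarith
      have hPle : F ≤ P (D n k) := measure_mono hsub
      have := ENNReal.toReal_mono (measure_ne_top _ _) hPle
      rw [hDval n k hcase] at this
      refine le_trans this ?_
      calc (k : ℝ) * (p / 2 ^ n) ≤ (t * 2 ^ n + 1) * (p / 2 ^ n) := by
            apply mul_le_mul_of_nonneg_right hku (by positivity)
      _ = (t + (2⁻¹:ℝ) ^ n) * p := by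
            rw [inv_pow]
            field_simp
    · -- then t * 2^n ≥ 2^n i.e. t ≥ 1
      push_neg at hcase
      have ht : 1 ≤ t := by
        have : (2:ℝ) ^ n ≤ t * 2 ^ n := by
          have hfl : 2 ^ n ≤ ⌊t * 2 ^ n⌋₊ := by omega
          calc (2:ℝ) ^ n = ((2 ^ n : ℕ) : ℝ) := by push_cast; ring
          _ ≤ (⌊t * 2 ^ n⌋₊ : ℝ) := by exact_mod_cast hfl
          _ ≤ t * 2 ^ n := Nat.floor_le (by positivity)
        nlinarith
      have hFle : F ≤ P C := measure_mono inter_subset_left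
      have := ENNReal.toReal_mono (measure_ne_top _ _) hFle
      calc F.toReal ≤ p := this
      _ ≤ (t + (2⁻¹:ℝ) ^ n) * p := by
          nlinarith [pow_pos (show (0:ℝ) < 2⁻¹ by norm_num) n, pow_nonneg (show (0:ℝ) ≤ 2⁻¹ by norm_num) n]
  -- take limits
  have htend : Tendsto (fun n : ℕ => ((2⁻¹ : ℝ)) ^ n) atTop (𝓝 0) :=
    tendsto_pow_atTop_nhds_zero_of_lt_one (by norm_num) (by norm_num)
  have hlim1 : Tendsto (fun n : ℕ => (t - (2⁻¹ : ℝ) ^ n) * p) atTop (𝓝 (t * p)) := by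
    have : Tendsto (fun n : ℕ => t - (2⁻¹ : ℝ) ^ n) atTop (𝓝 (t - 0)) :=
      tendsto_const_nhds.sub htend
    simpa using this.mul_const p
  have hlim2 : Tendsto (fun n : ℕ => (t + (2⁻¹ : ℝ) ^ n) * p) atTop (𝓝 (t * p)) := by
    have : Tendsto (fun n : ℕ => t + (2⁻¹ : ℝ) ^ n) atTop (𝓝 (t + 0)) :=
      tendsto_const_nhds.add htend
    simpa using this.mul_const p
  have hge : t * p ≤ F.toReal := le_of_tendsto hlim1 (Eventually.of_forall hlow)
  have hle2 : F.toReal ≤ t * p := ge_of_tendsto hlim2 (Eventually.of_forall hhigh)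
  have hFreal : F.toReal = t * p := le_antisymm hle2 hge
  rw [← ENNReal.ofReal_toReal hFfin, hFreal, ENNReal.ofReal_mul ht0, hp,
    ENNReal.ofReal_toReal (measure_ne_top _ _)]

end Unif

section Pair
variable {Ω : Type*} [MeasurableSpace Ω] {P : Measure Ω} [IsProbabilityMeasure P]

theorem ofReal_eq_ofReal_max (x : ℝ) : ENNReal.ofReal x = ENNReal.ofReal (max 0 x) := by
  rcases le_total x 0 with h | h
  · rw [ENNReal.ofReal_eq_zero.2 h, max_eq_left h, ENNReal.ofReal_zero]
  · rw [max_eq_right h]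

/-- full-line CDF for the uniform variable on `C` over `[a,b]`. -/
theorem Nonatomic.exists_uniformOnIcc (hP : Nonatomic P) {C : Set Ω} (hC : MeasurableSet C)
    {a b : ℝ} (hab : a ≤ b) (hlen : (P C).toReal = b - a) :
    ∃ W : Ω → ℝ, Measurable W ∧ (∀ ω, W ω ∈ Icc a b) ∧
      ∀ s : ℝ, P (C ∩ {ω | W ω ≤ s}) = ENNReal.ofReal (min (s - a) (b - a)) := by
  have main : ∃ W : Ω → ℝ, Measurable W ∧ (∀ ω, W ω ∈ Icc a b) ∧
      ∀ t, a ≤ t → t ≤ b → (P (C ∩ {ω | W ω ≤ t})).toReal = t - a := by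
    obtain ⟨W0, hW0m, hW001, hW0cdf⟩ := hP.exists_uniformOn hC
    by_cases hzero : P C = 0
    · refine ⟨fun _ => a, measurable_const, fun ω => ⟨le_rfl, hab⟩, ?_⟩
      intro t hta htb
      have hba : b - a = 0 := by rw [← hlen, hzero]; simp
      have ht : t = a := by linarith
      have h0 : P (C ∩ {ω : Ω | (fun _ => a) ω ≤ t}) = 0 :=
        measure_mono_null inter_subset_left hzero
      rw [h0, ht]
      simp
    · have hba : 0 < b - a := by
        rw [← hlen]
        exact ENNReal.toReal_pos hzero (measure_ne_top _ _)
      refine ⟨fun ω => a + (b - a) * W0 ω, by fun_prop, ?_, ?_⟩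
      · intro ω
        obtain ⟨h0, h1⟩ := hW001 ω
        simp only [mem_Icc]
        exact ⟨by nlinarith, by nlinarith⟩
      · intro t hta htb
        have hset : C ∩ {ω | a + (b - a) * W0 ω ≤ t} = C ∩ {ω | W0 ω ≤ (t - a) / (b - a)} := by
          ext ω
          simp only [mem_inter_iff, mem_setOf_eq, and_congr_right_iff]
          intro _
          rw [le_div_iff₀ hba]
          constructor <;> intro h <;> nlinarith
        rw [hset, hW0cdf _ (div_nonneg (by linarith) hba.le) (by rw [div_le_one hba]; linarith)]
        rw [ENNReal.toReal_mul, ENNReal.toReal_ofReal (div_nonneg (by linarith) hba.le), hlen]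
        field_simp
  obtain ⟨W, hWm, hWab, hWcdf⟩ := main
  refine ⟨W, hWm, hWab, ?_⟩
  intro s
  rcases lt_or_ge s a with hs | hs
  · have hempty : C ∩ {ω | W ω ≤ s} = ∅ := by
      ext ω
      simp only [mem_inter_iff, mem_setOf_eq, mem_empty_iff_false, iff_false, not_and]
      intro _
      have := (hWab ω).1
      linarith
    rw [hempty]
    have : min (s - a) (b - a) = s - a := min_eq_left (by linarith)
    rw [this]
    simp [ENNReal.ofReal_eq_zero.2 (by linarith : s - a ≤ 0)]
  rcases le_total s b with hsb | hsb
  · have h1 := hWcdf s hs hsb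
    have h2 : min (s - a) (b - a) = s - a := min_eq_left (by linarith)
    rw [h2, ← h1, ENNReal.ofReal_toReal (measure_ne_top _ _)]
  · have hfull : C ∩ {ω | W ω ≤ s} = C := by
      ext ω
      simp only [mem_inter_iff, mem_setOf_eq, and_iff_left_iff_imp]
      intro hC'
      have := (hWab ω).2
      linarith
    rw [hfull]
    have h2 : min (s - a) (b - a) = b - a := min_eq_right (by linarith)
    rw [h2, ← hlen, ENNReal.ofReal_toReal (measure_ne_top _ _)]

end Pair

section Pair2
variable {Ω : Type*} [MeasurableSpace Ω] {P : Measure Ω} [IsProbabilityMeasure P]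

theorem Nonatomic.exists_identDistrib_pair (hP : Nonatomic P) {A : Set Ω} (hA : MeasurableSet A) :
    ∃ U V : Ω → ℝ, Measurable U ∧ Measurable V ∧ (∀ ω, |U ω| ≤ 1) ∧ (∀ ω, |V ω| ≤ 1) ∧
      Measure.map U P = Measure.map V P ∧
      ∀ ω, U ω - V ω = A.indicator (fun _ => (1:ℝ)) ω - (P A).toReal := by
  classical
  set p : ℝ := (P A).toReal with hp
  set q : ℝ := 1 - p with hq
  have hp0 : 0 ≤ p := ENNReal.toReal_nonneg
  have hp1 : p ≤ 1 := by
    have h := prob_le_one (μ := P) (s := A)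
    calc p ≤ (1 : ℝ≥0∞).toReal := ENNReal.toReal_mono (by simp) h
    _ = 1 := by simp
  have hq0 : 0 ≤ q := by rw [hq]; linarith
  have hq1 : q ≤ 1 := by rw [hq]; linarith
  have hcompl : (P Aᶜ).toReal = q := by
    rw [prob_compl_eq_one_sub hA, ENNReal.toReal_sub_of_le prob_le_one (by simp)]
    simp [hp, hq]
  obtain ⟨W1, hW1m, hW1ab, hW1cdf⟩ := hP.exists_uniformOnIcc hA
    (show q ≤ 1 by linarith) (show (P A).toReal = 1 - q by rw [hq]; ring)
  obtain ⟨W2, hW2m, hW2ab, hW2cdf⟩ := hP.exists_uniformOnIcc hA.compl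
    (show (0:ℝ) ≤ q from hq0) (by rw [hcompl]; ring)
  set U : Ω → ℝ := A.piecewise W1 W2 with hU
  set V : Ω → ℝ := fun ω => U ω + p - A.indicator (fun _ => (1:ℝ)) ω with hV
  have hUm : Measurable U := Measurable.piecewise hA hW1m hW2m
  have hVm : Measurable V := ((hUm.add_const p).sub (measurable_const.indicator hA))
  have hUb : ∀ ω, |U ω| ≤ 1 := by
    intro ω
    rw [abs_le, hU]
    by_cases hω : ω ∈ A
    · rw [Set.piecewise_eq_of_mem _ _ _ hω]
      obtain ⟨h1, h2⟩ := hW1ab ω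
      exact ⟨by linarith, by linarith⟩
    · rw [Set.piecewise_eq_of_notMem _ _ _ hω]
      obtain ⟨h1, h2⟩ := hW2ab ω
      exact ⟨by linarith, by linarith⟩
  have hVb : ∀ ω, |V ω| ≤ 1 := by
    intro ω
    rw [abs_le, hV]
    simp only
    by_cases hω : ω ∈ A
    · rw [hU, Set.piecewise_eq_of_mem _ _ _ hω, Set.indicator_of_mem hω]
      obtain ⟨h1, h2⟩ := hW1ab ω
      exact ⟨by linarith, by linarith⟩
    · rw [hU, Set.piecewise_eq_of_notMem _ _ _ hω, Set.indicator_of_notMem hω]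
      obtain ⟨h1, h2⟩ := hW2ab ω
      exact ⟨by linarith, by linarith⟩
  have hsplit : ∀ (T : Set Ω), P T = P (T ∩ A) + P (T ∩ Aᶜ) := by
    intro T
    have h := measure_inter_add_diff (μ := P) T hA
    rw [diff_eq] at h
    exact h.symm
  have hUIic : ∀ s, P {ω | U ω ≤ s}
      = ENNReal.ofReal (min (s - q) p) + ENNReal.ofReal (min s q) := by
    intro s
    rw [hsplit {ω | U ω ≤ s}]
    have e1 : {ω | U ω ≤ s} ∩ A = A ∩ {ω | W1 ω ≤ s} := by
      ext ω
      simp only [mem_inter_iff, mem_setOf_eq]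
      constructor
      · rintro ⟨h1, h2⟩
        rw [hU, Set.piecewise_eq_of_mem _ _ _ h2] at h1
        exact ⟨h2, h1⟩
      · rintro ⟨h2, h1⟩
        rw [hU]
        exact ⟨by rw [Set.piecewise_eq_of_mem _ _ _ h2]; exact h1, h2⟩
    have e2 : {ω | U ω ≤ s} ∩ Aᶜ = Aᶜ ∩ {ω | W2 ω ≤ s} := by
      ext ω
      simp only [mem_inter_iff, mem_setOf_eq, mem_compl_iff]
      constructor
      · rintro ⟨h1, h2⟩
        rw [hU, Set.piecewise_eq_of_notMem _ _ _ h2] at h1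
        exact ⟨h2, h1⟩
      · rintro ⟨h2, h1⟩
        rw [hU]
        exact ⟨by rw [Set.piecewise_eq_of_notMem _ _ _ h2]; exact h1, h2⟩
    rw [e1, e2, hW1cdf s, hW2cdf s]
    have : (1:ℝ) - q = p := by rw [hq]; ring
    rw [this]
    norm_num
  have hVIic : ∀ s, P {ω | V ω ≤ s}
      = ENNReal.ofReal (min s p) + ENNReal.ofReal (min (s - p) q) := by
    intro s
    rw [hsplit {ω | V ω ≤ s}]
    have e1 : {ω | V ω ≤ s} ∩ A = A ∩ {ω | W1 ω ≤ s + q} := by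
      ext ω
      simp only [mem_inter_iff, mem_setOf_eq]
      constructor
      · rintro ⟨h1, h2⟩
        rw [hV] at h1
        simp only at h1
        rw [hU, Set.piecewise_eq_of_mem _ _ _ h2, Set.indicator_of_mem h2] at h1
        exact ⟨h2, by rw [hq]; linarith⟩
      · rintro ⟨h2, h1⟩
        refine ⟨?_, h2⟩
        rw [hV]
        simp only
        rw [hU, Set.piecewise_eq_of_mem _ _ _ h2, Set.indicator_of_mem h2]
        rw [hq] at h1
        linarith
    have e2 : {ω | V ω ≤ s} ∩ Aᶜ = Aᶜ ∩ {ω | W2 ω ≤ s - p} := by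
      ext ω
      simp only [mem_inter_iff, mem_setOf_eq, mem_compl_iff]
      constructor
      · rintro ⟨h1, h2⟩
        rw [hV] at h1
        simp only at h1
        rw [hU, Set.piecewise_eq_of_notMem _ _ _ h2, Set.indicator_of_notMem h2] at h1
        exact ⟨h2, by linarith⟩
      · rintro ⟨h2, h1⟩
        refine ⟨?_, h2⟩
        rw [hV]
        simp only
        rw [hU, Set.piecewise_eq_of_notMem _ _ _ h2, Set.indicator_of_notMem h2]
        linarith
    rw [e1, e2, hW1cdf (s + q), hW2cdf (s - p)]
    have h1 : s + q - q = s := by ring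
    have h2 : (1:ℝ) - q = p := by rw [hq]; ring
    rw [h1, h2]
    norm_num
  have hreal : ∀ s : ℝ, ENNReal.ofReal (min (s - q) p) + ENNReal.ofReal (min s q)
      = ENNReal.ofReal (min s p) + ENNReal.ofReal (min (s - p) q) := by
    intro s
    rw [ofReal_eq_ofReal_max (min (s - q) p), ofReal_eq_ofReal_max (min s q),
      ofReal_eq_ofReal_max (min s p), ofReal_eq_ofReal_max (min (s - p) q),
      ← ENNReal.ofReal_add (le_max_left _ _) (le_max_left _ _),
      ← ENNReal.ofReal_add (le_max_left _ _) (le_max_left _ _)]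
    congr 1
    have hpq : p + q = 1 := by rw [hq]; ring
    simp only [min_def, max_def]
    split_ifs <;> linarith
  have hmap : Measure.map U P = Measure.map V P := by
    have hUprob : IsProbabilityMeasure (Measure.map U P) :=
      Measure.isProbabilityMeasure_map hUm.aemeasurable
    have hVprob : IsProbabilityMeasure (Measure.map V P) :=
      Measure.isProbabilityMeasure_map hVm.aemeasurable
    apply Measure.ext_of_Iic
    intro s
    rw [Measure.map_apply hUm measurableSet_Iic, Measure.map_apply hVm measurableSet_Iic]
    have hpre1 : U ⁻¹' (Iic s) = {ω | U ω ≤ s} := rfl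
    have hpre2 : V ⁻¹' (Iic s) = {ω | V ω ≤ s} := rfl
    rw [hpre1, hpre2, hUIic, hVIic, hreal]
  refine ⟨U, V, hUm, hVm, hUb, hVb, hmap, ?_⟩
  intro ω
  rw [hV]
  simp only
  ring

end Pair2

section Final
variable {Ω : Type*} [MeasurableSpace Ω] {P : Measure Ω} [IsProbabilityMeasure P]

theorem Lp_coeFn_sum {ι : Type*} (s : Finset ι) (f : ι → Lp ℝ ⊤ P) :
    ⇑(∑ i ∈ s, f i) =ᵐ[P] fun ω => ∑ i ∈ s, f i ω := by
  classical
  induction s using Finset.cons_induction with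
  | empty =>
    simp only [Finset.sum_empty]
    exact Lp.coeFn_zero ℝ ⊤ P
  | cons i s hi ih =>
    rw [Finset.sum_cons]
    filter_upwards [Lp.coeFn_add (f i) (∑ j ∈ s, f j), ih] with ω h1 h2
    simp only [Finset.sum_cons]
    rw [h1]
    simp only [Pi.add_apply]
    rw [h2]

theorem indicator_sub_mean_mem_span (hP : Nonatomic P) {A : Set Ω} (hA : MeasurableSet A) :
    indicatorConstLp ⊤ hA (measure_ne_top P A) (1:ℝ)
      - (P A).toReal • Lp.const ⊤ P (1 : ℝ) ∈
      Submodule.span ℝ {W : Lp ℝ ⊤ P |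
        ∃ U V : Lp ℝ ⊤ P, IdentDistrib (U : Ω → ℝ) (V : Ω → ℝ) P P ∧ W = U - V} := by
  obtain ⟨U, V, hUm, hVm, hUb, hVb, hmap, hdiff⟩ := hP.exists_identDistrib_pair hA
  have hUL : MemLp U ⊤ P := memLp_top_of_bound hUm.aestronglyMeasurable 1
    (Eventually.of_forall fun ω => by simpa using hUb ω)
  have hVL : MemLp V ⊤ P := memLp_top_of_bound hVm.aestronglyMeasurable 1
    (Eventually.of_forall fun ω => by simpa using hVb ω)
  set Ue := hUL.toLp U with hUe
  set Ve := hVL.toLp V with hVe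
  have hid : IdentDistrib (Ue : Ω → ℝ) (Ve : Ω → ℝ) P P := by
    refine ⟨(Lp.aestronglyMeasurable Ue).aemeasurable,
      (Lp.aestronglyMeasurable Ve).aemeasurable, ?_⟩
    rw [Measure.map_congr hUL.coeFn_toLp, Measure.map_congr hVL.coeFn_toLp]
    exact hmap
  have heq : indicatorConstLp ⊤ hA (measure_ne_top P A) (1:ℝ)
      - (P A).toReal • Lp.const ⊤ P (1 : ℝ) = Ue - Ve := by
    apply Lp.ext
    filter_upwards [Lp.coeFn_sub (indicatorConstLp ⊤ hA (measure_ne_top P A) (1:ℝ))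
        ((P A).toReal • Lp.const ⊤ P (1 : ℝ)),
      indicatorConstLp_coeFn (p := (⊤:ℝ≥0∞)) (hs := hA) (hμs := measure_ne_top P A) (c := (1:ℝ)),
      Lp.coeFn_smul ((P A).toReal) (Lp.const ⊤ P (1:ℝ)),
      Lp.coeFn_const ⊤ P (1:ℝ),
      Lp.coeFn_sub Ue Ve, hUL.coeFn_toLp, hVL.coeFn_toLp] with ω h1 h2 h3 h4 h5 h6 h7
    rw [h1, h5]
    simp only [Pi.sub_apply]
    rw [h2, h3, h6, h7]
    simp only [Pi.smul_apply, smul_eq_mul]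
    rw [h4]
    simp only [Function.const_apply, mul_one]
    exact (hdiff ω).symm
  rw [heq]
  exact Submodule.subset_span ⟨Ue, Ve, hid, rfl⟩

end Final

section Main
variable {Ω : Type*} [MeasurableSpace Ω]

theorem sub_mean_mem_closure_span_Linfty'
    (P : Measure Ω) [IsProbabilityMeasure P]
    (hP : Nonatomic P) (X : Lp ℝ ⊤ P) :
    X - (∫ ω, X ω ∂P) • Lp.const ⊤ P (1 : ℝ) ∈
      closure ((Submodule.span ℝ {W : Lp ℝ ⊤ P |
        ∃ U V : Lp ℝ ⊤ P, IdentDistrib (U : Ω → ℝ) (V : Ω → ℝ) P P ∧ W = U - V} :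
          Submodule ℝ (Lp ℝ ⊤ P)) : Set (Lp ℝ ⊤ P)) := by
  classical
  rw [Metric.mem_closure_iff]
  intro ε hε
  set δ : ℝ := ε / 3 with hδ
  have hδ0 : 0 < δ := by positivity
  -- a bounded measurable representative of X
  have hXaesm := Lp.aestronglyMeasurable X
  set g0 : Ω → ℝ := hXaesm.mk _ with hg0
  have hg0sm : StronglyMeasurable g0 := hXaesm.stronglyMeasurable_mk
  have hg0ae : (X : Ω → ℝ) =ᵐ[P] g0 := hXaesm.ae_eq_mk
  set C : ℝ := ‖X‖ with hCdef
  have hC0 : 0 ≤ C := norm_nonneg X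
  have hfin : eLpNormEssSup (X : Ω → ℝ) P ≠ ⊤ := by
    have h := Lp.eLpNorm_ne_top X
    rwa [eLpNorm_exponent_top] at h
  have haebound : ∀ᵐ ω ∂P, ‖(X : Ω → ℝ) ω‖ ≤ C := by
    filter_upwards [ae_le_eLpNormEssSup (f := (X : Ω → ℝ)) (μ := P)] with ω hω
    have h2 := ENNReal.toReal_mono hfin hω
    rw [hCdef, Lp.norm_def, eLpNorm_exponent_top]
    simpa using h2
  set g : Ω → ℝ := fun ω => max (-C) (min C (g0 ω)) with hgdef
  have hgm : Measurable g :=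
    Measurable.max measurable_const (Measurable.min measurable_const hg0sm.measurable)
  have hgae : (X : Ω → ℝ) =ᵐ[P] g := by
    filter_upwards [hg0ae, haebound] with ω h1 h2
    rw [hgdef]
    simp only
    rw [h1, Real.norm_eq_abs, abs_le] at h2
    rw [min_eq_right h2.2, max_eq_right h2.1, h1]
  have hgb : ∀ ω, |g ω| ≤ C := by
    intro ω
    rw [hgdef, abs_le]
    exact ⟨le_max_left _ _, max_le (by linarith) (min_le_left _ _)⟩
  -- the level sets
  set m : ℕ := ⌈2 * C / δ⌉₊ + 1 with hm
  have hmbig : 2 * C < m * δ := by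
    have h1 : 2 * C / δ ≤ (⌈2 * C / δ⌉₊ : ℝ) := Nat.le_ceil _
    have h2 : (⌈2 * C / δ⌉₊ : ℝ) < m := by rw [hm]; push_cast; linarith
    have h3 := (div_lt_iff₀ hδ0).1 (lt_of_le_of_lt h1 h2)
    linarith
  set A : ℕ → Set Ω := fun k => g ⁻¹' (Ico (-C + k * δ) (-C + (k + 1) * δ)) with hA
  have hAmeas : ∀ k, MeasurableSet (A k) := fun k => hgm measurableSet_Ico
  set k0 : Ω → ℕ := fun ω => ⌊(g ω + C) / δ⌋₊ with hk0
  have hgCpos : ∀ ω, 0 ≤ (g ω + C) / δ := fun ω =>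
    div_nonneg (by have := (abs_le.1 (hgb ω)).1; linarith) hδ0.le
  have hk0mem : ∀ ω, ω ∈ A (k0 ω) := by
    intro ω
    rw [hA]
    simp only [mem_preimage, mem_Ico]
    have h1 : (k0 ω : ℝ) ≤ (g ω + C) / δ := Nat.floor_le (hgCpos ω)
    have h2 : (g ω + C) / δ < k0 ω + 1 := Nat.lt_floor_add_one _
    rw [le_div_iff₀ hδ0] at h1
    rw [div_lt_iff₀ hδ0] at h2
    constructor
    · linarith
    · nlinarith
  have hk0lt : ∀ ω, k0 ω < m := by
    intro ω
    rw [hk0]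
    simp only
    rw [Nat.floor_lt (hgCpos ω), div_lt_iff₀ hδ0]
    have := (abs_le.1 (hgb ω)).2
    linarith
  have hmemk : ∀ ω k, ω ∈ A k → k = k0 ω := by
    intro ω k hk
    rw [hA] at hk
    simp only [mem_preimage, mem_Ico] at hk
    rw [hk0]
    simp only
    symm
    rw [Nat.floor_eq_iff (hgCpos ω)]
    constructor
    · rw [le_div_iff₀ hδ0]; linarith [hk.1]
    · rw [div_lt_iff₀ hδ0]; push_cast; nlinarith [hk.2]
  -- the approximating element of the span
  set Z : Lp ℝ ⊤ P := ∑ k ∈ Finset.range m, (-C + k * δ) •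
      (indicatorConstLp ⊤ (hAmeas k) (measure_ne_top P _) (1:ℝ)
        - (P (A k)).toReal • Lp.const ⊤ P (1:ℝ)) with hZ
  have hZmem : Z ∈ Submodule.span ℝ {W : Lp ℝ ⊤ P |
      ∃ U V : Lp ℝ ⊤ P, IdentDistrib (U : Ω → ℝ) (V : Ω → ℝ) P P ∧ W = U - V} := by
    rw [hZ]
    apply Submodule.sum_mem
    intro k _
    exact Submodule.smul_mem _ _ (indicator_sub_mean_mem_span hP (hAmeas k))
  refine ⟨Z, hZmem, ?_⟩
  set hfun : Ω → ℝ := fun ω =>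
    ∑ k ∈ Finset.range m, (-C + k * δ) * (A k).indicator (fun _ => (1:ℝ)) ω with hhfun
  set c : ℝ := ∑ k ∈ Finset.range m, (-C + k * δ) * (P (A k)).toReal with hc
  -- coe of Z
  have hZcoe : ⇑Z =ᵐ[P] fun ω => hfun ω - c := by
    have hterm : ∀ k ∈ Finset.range m,
        ⇑((-C + k * δ) • (indicatorConstLp ⊤ (hAmeas k) (measure_ne_top P _) (1:ℝ)
            - (P (A k)).toReal • Lp.const ⊤ P (1:ℝ)))
          =ᵐ[P] fun ω => (-C + k * δ) * ((A k).indicator (fun _ => (1:ℝ)) ω - (P (A k)).toReal) := by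
      intro k _
      filter_upwards [Lp.coeFn_smul (-C + k * δ)
          (indicatorConstLp ⊤ (hAmeas k) (measure_ne_top P _) (1:ℝ)
            - (P (A k)).toReal • Lp.const ⊤ P (1:ℝ)),
        Lp.coeFn_sub (indicatorConstLp ⊤ (hAmeas k) (measure_ne_top P _) (1:ℝ))
          ((P (A k)).toReal • Lp.const ⊤ P (1:ℝ)),
        indicatorConstLp_coeFn (p := (⊤:ℝ≥0∞)) (hs := hAmeas k)
          (hμs := measure_ne_top P (A k)) (c := (1:ℝ)),
        Lp.coeFn_smul ((P (A k)).toReal) (Lp.const ⊤ P (1:ℝ)),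
        Lp.coeFn_const ⊤ P (1:ℝ)] with ω h1 h2 h3 h4 h5
      rw [h1]
      simp only [Pi.smul_apply, smul_eq_mul]
      rw [h2]
      simp only [Pi.sub_apply]
      rw [h3, h4]
      simp only [Pi.smul_apply, smul_eq_mul]
      rw [h5]
      simp only [Function.const_apply, mul_one]
    have hsum := Lp_coeFn_sum (Finset.range m) (fun k => (-C + k * δ) •
      (indicatorConstLp ⊤ (hAmeas k) (measure_ne_top P _) (1:ℝ)
        - (P (A k)).toReal • Lp.const ⊤ P (1:ℝ)))
    have hall : ∀ᵐ ω ∂P, ∀ k ∈ Finset.range m,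
        ⇑((-C + k * δ) • (indicatorConstLp ⊤ (hAmeas k) (measure_ne_top P _) (1:ℝ)
            - (P (A k)).toReal • Lp.const ⊤ P (1:ℝ))) ω
          = (-C + k * δ) * ((A k).indicator (fun _ => (1:ℝ)) ω - (P (A k)).toReal) :=
      (eventually_all_finset _).2 hterm
    rw [hZ]
    filter_upwards [hsum, hall] with ω h1 h2
    rw [h1, Finset.sum_congr rfl (fun k hk => h2 k hk)]
    rw [hhfun, hc]
    simp only [mul_sub]
    rw [Finset.sum_sub_distrib]
  -- integrals
  have hind_int : ∀ k, Integrable (fun ω => (-C + k * δ) * (A k).indicator (fun _ => (1:ℝ)) ω) P :=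
    fun k => ((integrable_const (1:ℝ)).indicator (hAmeas k)).const_mul _
  have hh_int : Integrable hfun P := by
    rw [hhfun]
    exact integrable_finset_sum _ (fun k _ => hind_int k)
  have hint_h : ∫ ω, hfun ω ∂P = c := by
    rw [hhfun, hc]
    rw [integral_finset_sum _ (fun k _ => hind_int k)]
    refine Finset.sum_congr rfl fun k _ => ?_
    rw [integral_const_mul, integral_indicator_const (1:ℝ) (hAmeas k)]
    simp [Measure.real]
  have hg_int : Integrable g P :=
    MemLp.integrable le_top (memLp_top_of_bound hgm.aestronglyMeasurable C
      (Eventually.of_forall fun ω => by simpa [Real.norm_eq_abs] using hgb ω))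
  have hIeq : ∫ ω, (X : Ω → ℝ) ω ∂P = ∫ ω, g ω ∂P := integral_congr_ae hgae
  -- pointwise bound
  have hgh : ∀ ω, |g ω - hfun ω| ≤ δ := by
    intro ω
    have hcollapse : hfun ω = -C + k0 ω * δ := by
      rw [hhfun]
      simp only
      rw [Finset.sum_eq_single (k0 ω)]
      · rw [Set.indicator_of_mem (hk0mem ω)]
        ring
      · intro k _ hne
        rw [Set.indicator_of_notMem, mul_zero]
        intro hmem
        exact hne (hmemk ω k hmem)
      · intro hnotin
        exact absurd (Finset.mem_range.2 (hk0lt ω)) hnotin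
    have hmem := hk0mem ω
    rw [hA] at hmem
    simp only [mem_preimage, mem_Ico] at hmem
    rw [hcollapse, abs_le]
    constructor
    · nlinarith [hmem.2]
    · linarith [hmem.1]
  have hIc : |(∫ ω, g ω ∂P) - c| ≤ δ := by
    have hsub_int : ∫ ω, (g ω - hfun ω) ∂P = (∫ ω, g ω ∂P) - c := by
      rw [integral_sub hg_int hh_int, hint_h]
    have hb := norm_integral_le_of_norm_le_const (μ := P) (f := fun ω => g ω - hfun ω) (C := δ)
      (Eventually.of_forall fun ω => by simpa [Real.norm_eq_abs] using hgh ω)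
    rw [hsub_int] at hb
    simpa [Real.norm_eq_abs, measure_univ] using hb
  -- final bound
  set Y : Lp ℝ ⊤ P := X - (∫ ω, X ω ∂P) • Lp.const ⊤ P (1 : ℝ) with hY
  have hcoe : ⇑(Y - Z) =ᵐ[P] fun ω => (g ω - hfun ω) - ((∫ ω', g ω' ∂P) - c) := by
    filter_upwards [Lp.coeFn_sub Y Z, Lp.coeFn_sub X ((∫ ω, X ω ∂P) • Lp.const ⊤ P (1:ℝ)),
      Lp.coeFn_smul (∫ ω, X ω ∂P) (Lp.const ⊤ P (1:ℝ)), Lp.coeFn_const ⊤ P (1:ℝ),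
      hZcoe, hgae] with ω h1 h2 h3 h4 h5 h6
    rw [h1]
    simp only [Pi.sub_apply]
    rw [hY] at h1 ⊢
    rw [h2]
    simp only [Pi.sub_apply]
    rw [h3]
    simp only [Pi.smul_apply, smul_eq_mul]
    rw [h4]
    simp only [Function.const_apply, mul_one]
    rw [h5, h6, hIeq]
    ring
  have hbound : ∀ᵐ ω ∂P, ‖(⇑(Y - Z)) ω‖ ≤ 2 * δ := by
    filter_upwards [hcoe] with ω h1
    rw [h1, Real.norm_eq_abs]
    have e1 := hgh ω
    have e2 := hIc
    have e3 : |(g ω - hfun ω) - ((∫ ω', g ω' ∂P) - c)|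
        ≤ |g ω - hfun ω| + |(∫ ω', g ω' ∂P) - c| := by
      rw [sub_eq_add_neg]
      refine (abs_add_le _ _).trans ?_
      rw [abs_neg]
    linarith
  have hnorm := Lp.norm_le_of_ae_bound (f := Y - Z) (by positivity : (0:ℝ) ≤ 2 * δ) hbound
  have hfac : (measureUnivNNReal P : ℝ) ^ ((⊤:ℝ≥0∞).toReal)⁻¹ = 1 := by
    simp
  rw [hfac, one_mul] at hnorm
  rw [dist_eq_norm]
  calc ‖Y - Z‖ ≤ 2 * δ := hnorm
  _ < ε := by rw [hδ]; linarith

end Main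


/-- For every `X ∈ L^∞`, the element `X - E[X]·1` lies in the norm closure of the span of
differences of identically distributed elements of `L^∞`. -/
theorem sub_mean_mem_closure_span_Linfty
    {Ω : Type*} [MeasurableSpace Ω] (P : Measure Ω) [IsProbabilityMeasure P]
    (hP : Nonatomic P) (X : Lp ℝ ⊤ P) :
    X - (∫ ω, X ω ∂P) • Lp.const ⊤ P (1 : ℝ) ∈
      closure ((Submodule.span ℝ {W : Lp ℝ ⊤ P |
        ∃ U V : Lp ℝ ⊤ P, IdentDistrib (U : Ω → ℝ) (V : Ω → ℝ) P P ∧ W = U - V} :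
          Submodule ℝ (Lp ℝ ⊤ P)) : Set (Lp ℝ ⊤ P)) := by
  exact sub_mean_mem_closure_span_Linfty' P hP X
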